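/- Let F : ℝ ⇒ ℝ be a cyclically quasi-monotone multi-map with full domain, and let C_* = ⋂_{x∈ℝ} C^F(x). If γ ∈ C_*, then for every x > γ one has F(x) ⊆ [0, +∞), and for every x < γ one has F(x) ⊆ (−∞, 0]. -/

import Mathlib

/-!
A cyclically quasi-monotone `F` admits no ascending cycle, so `w ≺_F w` never holds. If `γ`
lies in every `C^F(w)`, then `w ≺_F γ` would give `w ≺_F w`; hence nothing precedes `γ`. In
particular no one-step path `x → γ` is ascending, i.e. `p * (γ - x) ≤ 0` for every `p ∈ F x`,
which is the sign condition on either side of `γ`.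
-/

/-- Cyclic quasi-monotonicity of a multi-map `F : ℝ ⇒ ℝ`. -/
def CyclicallyQuasiMonotone1 (F : ℝ → Set ℝ) : Prop :=
  ∀ (N : ℕ) (x p : ℕ → ℝ),
    0 < N → x N = x 0 → (∀ i < N, p i ∈ F (x i)) →
    ∃ i < N, p i * (x (i + 1) - x i) ≤ 0

/-- `x 0, …, x N` is an `F`-ascending path. -/
def AscendingPath1 (F : ℝ → Set ℝ) (x : ℕ → ℝ) (N : ℕ) : Prop :=
  ∀ i < N, ∃ p ∈ F (x i), 0 < p * (x (i + 1) - x i)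

/-- `a ≺_F b`: there is an `F`-ascending path from `a` to `b`. -/
def PrecF1 (F : ℝ → Set ℝ) (a b : ℝ) : Prop :=
  ∃ (N : ℕ) (x : ℕ → ℝ), 0 < N ∧ x 0 = a ∧ x N = b ∧ AscendingPath1 F x N

/-- `a ⪯_F b`: `{w : w ≺_F a} ⊆ {w : w ≺_F b}`. -/
def PreceqF1 (F : ℝ → Set ℝ) (a b : ℝ) : Prop :=
  ∀ w, PrecF1 F w a → PrecF1 F w b

/-- The convex set `C^F(x) = {w : w ⪯_F x}`. -/
def CF1 (F : ℝ → Set ℝ) (x : ℝ) : Set ℝ :=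
  {w | PreceqF1 F w x}

variable {F : ℝ → Set ℝ}

theorem precF1_of_mul_sub_pos {a b p : ℝ} (hp : p ∈ F a) (hpos : 0 < p * (b - a)) :
    PrecF1 F a b :=
  ⟨1, fun i => if i = 0 then a else b, one_pos, rfl, rfl, fun i hi => by
    obtain rfl : i = 0 := Nat.lt_one_iff.mp hi
    exact ⟨p, hp, hpos⟩⟩

theorem CyclicallyQuasiMonotone1.not_precF1_self (hF : CyclicallyQuasiMonotone1 F) (a : ℝ) :
    ¬ PrecF1 F a a := by
  rintro ⟨N, x, hN, hx0, hxN, hasc⟩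
  choose p hp hpos using hasc
  -- the cycle condition only constrains `p i` for `i < N`, so `0` is a harmless filler
  let q : ℕ → ℝ := fun i => if h : i < N then p i h else 0
  obtain ⟨i, hi, hle⟩ := hF N x q hN (hxN.trans hx0.symm) fun i hi => by
    simpa only [q, dif_pos hi] using hp i hi
  simp only [q, dif_pos hi] at hle
  exact (hpos i hi).not_ge hle

theorem CyclicallyQuasiMonotone1.not_precF1_of_mem_iInter_CF1 (hF : CyclicallyQuasiMonotone1 F)
    {γ : ℝ} (hγ : γ ∈ ⋂ x : ℝ, CF1 F x) (w : ℝ) : ¬ PrecF1 F w γ := fun hw =>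
  hF.not_precF1_self w (Set.mem_iInter.mp hγ w w hw)

theorem CyclicallyQuasiMonotone1.mul_sub_nonpos_of_mem_iInter_CF1
    (hF : CyclicallyQuasiMonotone1 F) {γ : ℝ} (hγ : γ ∈ ⋂ x : ℝ, CF1 F x) {x p : ℝ}
    (hp : p ∈ F x) : p * (γ - x) ≤ 0 :=
  le_of_not_gt fun hpos => hF.not_precF1_of_mem_iInter_CF1 hγ x (precF1_of_mul_sub_pos hp hpos)

theorem stmt11 (F : ℝ → Set ℝ)
    (hF : CyclicallyQuasiMonotone1 F) (γ : ℝ) (hγ : γ ∈ ⋂ x : ℝ, CF1 F x) :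
    (∀ x, γ < x → F x ⊆ Set.Ici (0 : ℝ)) ∧ (∀ x, x < γ → F x ⊆ Set.Iic (0 : ℝ)) :=
  ⟨fun _ hx _ hp => nonneg_of_mul_nonpos_left (hF.mul_sub_nonpos_of_mem_iInter_CF1 hγ hp)
      (sub_neg.mpr hx),
    fun _ hx _ hp => nonpos_of_mul_nonpos_left (hF.mul_sub_nonpos_of_mem_iInter_CF1 hγ hp)
      (sub_pos.mpr hx)⟩
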